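/- arXiv:2010.00096 — 5 statements merged into one kernel-verified Lean document; each statement's English description precedes it below -/
import Mathlib

section
/- Under the k-IS abstract properties (Self-inclusion, Containment, Immediacy, Output size with parameter k < n−1), if every view has cardinality at least n−k and the minimum view min_view has cardinality ℓ ≥ n−k ≥ 2, then among any n−1 of the defined views, at least one equals min_view. (Observation O: since at least ℓ ≥ 2 processes obtain min_view, any collection of views from n−1 distinct processes must include min_view.) -/
/-! Every process appearing in `min_view` must return `min_view`: by Immediacy its view is
contained in `min_view`, and by minimality it contains it. Since there is at most one pair per
index, `min_view` names at least `n - k ≥ 2` distinct processes, so it cannot miss all of the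
`n - 1` processes of `T`. -/

theorem Finset.card_image_fst_of_functional {α β : Type*} [DecidableEq α] {s : Finset (α × β)}
    (hs : ∀ a b b', (a, b) ∈ s → (a, b') ∈ s → b = b') :
    (s.image Prod.fst).card = s.card :=
  Finset.card_image_of_injOn fun p hp q hq hpq =>
    Prod.ext hpq (hs p.1 p.2 q.2 hp (hpq ▸ hq))

theorem view_eq_of_mem_minView {ι V : Type*} (views : ι → Option (Finset (ι × V)))
    {minView : Finset (ι × V)} {i₀ : ι} (hi₀ : views i₀ = some minView)
    (hmin : ∀ i w, views i = some w → minView ⊆ w)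
    (himm : ∀ i j vi vj, views i = some vi → views j = some vj →
      (∃ v, (i, v) ∈ vj) → vi ⊆ vj)
    {i : ι} {v : V} (hiv : (i, v) ∈ minView) {w : Finset (ι × V)} (hw : views i = some w) :
    w = minView :=
  (himm i i₀ w minView hw hi₀ ⟨v, hiv⟩).antisymm (hmin i w hw)

theorem kIS_observation_O_general
    (n k : ℕ) (Val : Type)
    (hk : k < n - 1)
    (views : Fin n → Option (Finset (Fin n × Val)))
    (minView : Finset (Fin n × Val))
    (hret : ∃ i₀, views i₀ = some minView)
    (hmin : ∀ i w, views i = some w → minView ⊆ w)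
    -- Immediacy
    (himm : ∀ i j vi vj, views i = some vi → views j = some vj →
      (∃ v, (i, v) ∈ vj) → vi ⊆ vj)
    -- Output size
    (hsize : ∀ i w, views i = some w → n - k ≤ w.card)
    (huniq : ∀ i v v', (i, v) ∈ minView → (i, v') ∈ minView → v = v')
    -- any n-1 processes all of which returned a view
    (T : Finset (Fin n)) (hT : T.card = n - 1)
    (hTdef : ∀ i ∈ T, (views i).isSome) :
    ∃ i ∈ T, views i = some minView := by
  obtain ⟨i₀, hi₀⟩ := hret
  have hprocs : (minView.image Prod.fst).card = minView.card :=
    Finset.card_image_fst_of_functional huniq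
  have hbig : 2 ≤ minView.card := by
    have := hsize i₀ minView hi₀
    omega
  obtain ⟨i, hi⟩ : ((minView.image Prod.fst) ∩ T).Nonempty := by
    refine Finset.inter_nonempty_of_card_lt_card_add_card
      (Finset.subset_univ _) (Finset.subset_univ _) ?_
    rw [Finset.card_univ, Fintype.card_fin]
    omega
  obtain ⟨hiS, hiT⟩ := Finset.mem_inter.mp hi
  obtain ⟨⟨_, v⟩, hiv, rfl⟩ := Finset.mem_image.mp hiS
  obtain ⟨w, hw⟩ := Option.isSome_iff_exists.mp (hTdef _ hiT)
  refine ⟨_, hiT, ?_⟩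
  rw [hw, view_eq_of_mem_minView views hi₀ hmin himm hiv hw]

/-- Observation O: with k < n-1 (so n-k ≥ 2), among the views
returned by any n-1 distinct processes, at least one equals `min_view`. -/
theorem kIS_observation_O
    (n k : ℕ) (Val : Type) [DecidableEq Val]
    (hn : 3 ≤ n) (hk : k < n - 1)
    (views : Fin n → Option (Finset (Fin n × Val)))
    (minView : Finset (Fin n × Val))
    (hret : ∃ i₀, views i₀ = some minView)
    (hmin : ∀ i w, views i = some w → minView ⊆ w)
    -- Self-inclusion
    (hself : ∀ i vi, views i = some vi → ∃ v, (i, v) ∈ vi)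
    -- Containment
    (hcont : ∀ i j vi vj, views i = some vi → views j = some vj →
      vi ⊆ vj ∨ vj ⊆ vi)
    -- Immediacy
    (himm : ∀ i j vi vj, views i = some vi → views j = some vj →
      (∃ v, (i, v) ∈ vj) → vi ⊆ vj)
    -- Output size
    (hsize : ∀ i w, views i = some w → n - k ≤ w.card)
    (huniq : ∀ i v v', (i, v) ∈ minView → (i, v') ∈ minView → v = v')
    -- any n-1 processes all of which returned a view
    (T : Finset (Fin n)) (hT : T.card = n - 1)
    (hTdef : ∀ i ∈ T, (views i).isSome) :
    ∃ i ∈ T, views i = some minView :=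
  kIS_observation_O_general n k Val hk views minView hret hmin himm hsize huniq T hT hTdef
end

section
/- Let view and aux_i, aux_j be finite sets of pairs such that aux_i and aux_j satisfy the IS Immediacy and Containment properties (⟨i,−⟩ ∈ aux_j ⇒ aux_i ⊆ aux_j, and aux_i, aux_j are ⊆-comparable), and define view_i = view ∪ aux_i, view_j = view ∪ aux_j. Then view_i and view_j are ⊆-comparable, and if ⟨i,−⟩ ∈ view_j with ⟨i,−⟩ ∉ view, then view_i ⊆ view_j. If additionally ⟨i,−⟩ ∈ view, then view ⊆ view_j trivially gives the needed inclusion when view_i = view. -/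
open Finset

/-- correctness core of the consensus-based k-IS construction.
With `view_i = view ∪ aux_i` and `view_j = view ∪ aux_j`, where the aux sets
satisfy IS Immediacy and Containment, the resulting views are ⊆-comparable,
and Immediacy-style inclusions hold. -/
theorem cons_kIS_union_lemma
    {ι Val : Type} [DecidableEq ι] [DecidableEq Val]
    (i : ι)
    (view auxi auxj : Finset (ι × Val))
    (hImm : (∃ v, (i, v) ∈ auxj) → auxi ⊆ auxj)
    (hComp : auxi ⊆ auxj ∨ auxj ⊆ auxi) :
    (view ∪ auxi ⊆ view ∪ auxj ∨ view ∪ auxj ⊆ view ∪ auxi) ∧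
    ((∃ v, (i, v) ∈ view ∪ auxj) → (∀ v, (i, v) ∉ view) →
       view ∪ auxi ⊆ view ∪ auxj) ∧
    ((∃ v, (i, v) ∈ view) → view ⊆ view ∪ auxj) :=
  ⟨hComp.imp union_subset_union_right union_subset_union_right,
    fun ⟨v, hv⟩ hview =>
      union_subset_union_right (hImm ⟨v, (mem_union.1 hv).resolve_left (hview v)⟩),
    fun _ => subset_union_left⟩
end

section
/- In the consensus-based k-IS construction, Immediacy holds: with P6 and P9 defined as before, and aux sets satisfying IS Immediacy (⟨i,−⟩ ∈ aux_j ⇒ aux_i ⊆ aux_j), suppose process i's own pair ⟨i, v_i⟩ belongs to view_j. Distinguish cases: (1) i, j ∈ P6: then view_i = view_j; (2) i ∈ P6, j ∈ P9: then view_i = view ⊆ view_j; (3) i, j ∈ P9: if ⟨i,v_i⟩ ∈ view then i ∈ P6 (contradiction), so ⟨i,v_i⟩ ∈ aux_j, hence aux_i ⊆ aux_j and view_i = view ∪ aux_i ⊆ view ∪ aux_j = view_j. Conclude view_i ⊆ view_j in all cases. -/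
theorem cons_kIS_immediacy_general
    {ι Val : Type} [DecidableEq ι] [DecidableEq Val]
    (view : Finset (ι × Val))
    (vals : ι → Val)                          -- v_i, the value written by i
    (aux : ι → Finset (ι × Val))
    (returned : ι → Finset (ι × Val))
    (hImmAux : ∀ i j, (∃ v, (i, v) ∈ aux j) → aux i ⊆ aux j)  -- IS Immediacy
    (hretIn : ∀ i, (i, vals i) ∈ view → returned i = view)         -- P6
    (hretOut : ∀ i, (i, vals i) ∉ view → returned i = view ∪ aux i) -- P9
    :
    ∀ i j, (i, vals i) ∈ returned j → returned i ⊆ returned j := by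
  intro i j hij
  have view_subset_returned : ∀ k, view ⊆ returned k := fun k => by
    by_cases hk : (k, vals k) ∈ view
    · rw [hretIn k hk]
    · rw [hretOut k hk]
      exact Finset.subset_union_left
  by_cases hi : (i, vals i) ∈ view
  · rw [hretIn i hi]
    exact view_subset_returned j
  · have hj : (j, vals j) ∉ view := fun hj => hi (hretIn j hj ▸ hij)
    rw [hretOut j hj] at hij ⊢
    have hi_aux : (i, vals i) ∈ aux j := (Finset.mem_union.mp hij).resolve_left hi
    rw [hretOut i hi]
    exact Finset.union_subset_union_right (hImmAux i j ⟨_, hi_aux⟩)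

/-- Immediacy of the consensus-based k-IS construction.
A process i with its own pair in the consensus output `view` returns `view`;
otherwise it returns `view ∪ aux i`, where the aux sets satisfy IS
Self-inclusion and Immediacy. Then `⟨i, v_i⟩ ∈ view_j → view_i ⊆ view_j`. -/
theorem cons_kIS_immediacy
    {ι Val : Type} [DecidableEq ι] [DecidableEq Val]
    (view : Finset (ι × Val))
    (vals : ι → Val)                          -- v_i, the value written by i
    (aux : ι → Finset (ι × Val))
    (returned : ι → Finset (ι × Val))
    (hselfaux : ∀ i, (i, vals i) ∈ aux i)     -- IS Self-inclusion
    (hImmAux : ∀ i j, (∃ v, (i, v) ∈ aux j) → aux i ⊆ aux j)  -- IS Immediacy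
    (hretIn : ∀ i, (i, vals i) ∈ view → returned i = view)         -- P6
    (hretOut : ∀ i, (i, vals i) ∉ view → returned i = view ∪ aux i) -- P9
    :
    ∀ i j, (i, vals i) ∈ returned j → returned i ⊆ returned j :=
  cons_kIS_immediacy_general view vals aux returned hImmAux hretIn hretOut
end

section
/- Under the hypotheses of the consensus reduction (Algorithm 1 run with k < n−1 and t = 1): every process that terminates computes the same value. Precisely, if each deciding process obtains the views of some n−1 processes (out of n, each view satisfying the k-IS properties with n−k ≥ 2), selects the ⊆-minimum among the views it obtained, and outputs the minimum value occurring in it, then all outputs are equal, and the output is a value that was written by some process (Validity). -/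
/-- A view `w` is "selected" by a deciding process: it is the ⊆-smallest among
the views of some set `R` of n-1 processes, all of which returned. -/
def SelectedView1 {n : ℕ} {Val : Type}
    (views : Fin n → Option (Finset (Fin n × Val)))
    (w : Finset (Fin n × Val)) : Prop :=
  ∃ R : Finset (Fin n), R.card = n - 1 ∧ (∀ r ∈ R, (views r).isSome) ∧
    (∃ r ∈ R, views r = some w) ∧
    (∀ r ∈ R, ∀ u, views r = some u → w ⊆ u)

/-!
A process that decides sees the views of all processes but at most one. The ⊆-least view
`minView`, of some process `i₀`, has at least `n - k ≥ 2` entries with distinct indices, so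
it records some process `j ≠ i₀`. Every decider sees `i₀` or `j`; in the second case
Immediacy gives `view j ⊆ minView`. Either way the selected view is contained in `minView`,
hence equal to it, and all values in it are inputs.
-/

theorem Finset.eq_of_notMem_of_card_eq_card_sub_one {α : Type*} [Fintype α] [DecidableEq α]
    {R : Finset α} (hR : R.card = Fintype.card α - 1) {i j : α} (hi : i ∉ R) (hj : j ∉ R) :
    i = j := by
  have hpos : 0 < Fintype.card α := Fintype.card_pos_iff.mpr ⟨i⟩
  have hcompl : Rᶜ.card ≤ 1 := by
    rw [Finset.card_compl]
    omega
  exact Finset.card_le_one.mp hcompl i (Finset.mem_compl.mpr hi) j (Finset.mem_compl.mpr hj)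

theorem exists_mem_fst_ne_of_one_lt_card {ι V : Type*} {s : Finset (ι × V)}
    (hfun : ∀ i v v', (i, v) ∈ s → (i, v') ∈ s → v = v') (hs : 1 < s.card) (i : ι) :
    ∃ p ∈ s, p.1 ≠ i := by
  classical
  have hinj : Set.InjOn Prod.fst (s : Set (ι × V)) := fun p hp q hq hpq =>
    Prod.ext hpq (hfun p.1 p.2 q.2 hp (hpq ▸ hq))
  obtain ⟨j, hj, hji⟩ :=
    Finset.exists_mem_ne (by rwa [Finset.card_image_of_injOn hinj]) i
  obtain ⟨p, hp, rfl⟩ := Finset.mem_image.mp hj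
  exact ⟨p, hp, hji⟩

namespace SelectedView1

variable {n : ℕ} {Val : Type} {views : Fin n → Option (Finset (Fin n × Val))}
  {w v₀ : Finset (Fin n × Val)} {i₀ : Fin n}

theorem subset_of_immediacy (hw : SelectedView1 views w) (hi₀ : views i₀ = some v₀)
    (himm : ∀ i j vi vj, views i = some vi → views j = some vj →
      (∃ v, (i, v) ∈ vj) → vi ⊆ vj)
    (hother : ∃ p ∈ v₀, p.1 ≠ i₀) :
    w ⊆ v₀ := by
  obtain ⟨R, hR, hsome, -, hsub⟩ := hw
  by_cases hi₀R : i₀ ∈ R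
  · exact hsub i₀ hi₀R v₀ hi₀
  obtain ⟨⟨j, v⟩, hjv, hji₀⟩ := hother
  have hjR : j ∈ R := by
    by_contra hjR
    exact hji₀ (Finset.eq_of_notMem_of_card_eq_card_sub_one
      (by rw [Fintype.card_fin]; exact hR) hjR hi₀R)
  obtain ⟨vj, hvj⟩ := Option.isSome_iff_exists.mp (hsome j hjR)
  exact (hsub j hjR vj hvj).trans (himm j i₀ vj v₀ hvj hi₀ ⟨v, hjv⟩)

theorem eq_of_least (hw : SelectedView1 views w) (hi₀ : views i₀ = some v₀)
    (hleast : ∀ i u, views i = some u → v₀ ⊆ u)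
    (himm : ∀ i j vi vj, views i = some vi → views j = some vj →
      (∃ v, (i, v) ∈ vj) → vi ⊆ vj)
    (hother : ∃ p ∈ v₀, p.1 ≠ i₀) :
    w = v₀ := by
  have hsub := hw.subset_of_immediacy hi₀ himm hother
  obtain ⟨-, -, -, ⟨r, -, hrw⟩, -⟩ := hw
  exact hsub.antisymm (hleast r w hrw)

end SelectedView1

theorem kIS_consensus_agreement_validity_general
    (n k : ℕ) (Val : Type) [LinearOrder Val]
    (hk : k < n - 1)
    (input : Fin n → Val)
    (views : Fin n → Option (Finset (Fin n × Val)))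
    (minView : Finset (Fin n × Val))
    (hret : ∃ i₀, views i₀ = some minView)
    (hmin : ∀ i w, views i = some w → minView ⊆ w)
    (himm : ∀ i j vi vj, views i = some vi → views j = some vj →
      (∃ v, (i, v) ∈ vj) → vi ⊆ vj)
    (hsize : ∀ i w, views i = some w → n - k ≤ w.card)
    (huniq : ∀ i v v', (i, v) ∈ minView → (i, v') ∈ minView → v = v')
    -- Validity of the views: a pair ⟨j, v⟩ records the value written by p_j
    (hvalid : ∀ i w, views i = some w → ∀ p ∈ w, p.2 = input p.1) :
    (∀ w w', SelectedView1 views w → SelectedView1 views w' → w = w') ∧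
    (∀ w, SelectedView1 views w → w = minView) ∧
    (∀ w, SelectedView1 views w → ∀ v ∈ w.image Prod.snd,
       ∃ j, v = input j) := by
  obtain ⟨i₀, hi₀⟩ := hret
  have hcard : 1 < minView.card := by
    have := hsize i₀ minView hi₀
    omega
  have hother : ∃ p ∈ minView, p.1 ≠ i₀ :=
    exists_mem_fst_ne_of_one_lt_card huniq hcard i₀
  have hsel : ∀ w, SelectedView1 views w → w = minView := fun w hw =>
    hw.eq_of_least hi₀ hmin himm hother
  refine ⟨fun w w' hw hw' => (hsel w hw).trans (hsel w' hw').symm, hsel, ?_⟩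
  intro w hw v hv
  obtain ⟨p, hp, rfl⟩ := Finset.mem_image.mp (hsel w hw ▸ hv)
  exact ⟨p.1, hvalid i₀ minView hi₀ p hp⟩

/-- Agreement and Validity of the consensus algorithm built on a
k-IS object with k < n-1 and t = 1: any two selected views coincide (so all
deciding processes output the same minimum value), and every value in a
selected view was written by some process. -/
theorem kIS_consensus_agreement_validity
    (n k : ℕ) (Val : Type) [LinearOrder Val]
    (hn : 3 ≤ n) (hk : k < n - 1)
    (input : Fin n → Val)
    (views : Fin n → Option (Finset (Fin n × Val)))
    (minView : Finset (Fin n × Val))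
    (hret : ∃ i₀, views i₀ = some minView)
    (hmin : ∀ i w, views i = some w → minView ⊆ w)
    (hself : ∀ i vi, views i = some vi → ∃ v, (i, v) ∈ vi)
    (hcont : ∀ i j vi vj, views i = some vi → views j = some vj →
      vi ⊆ vj ∨ vj ⊆ vi)
    (himm : ∀ i j vi vj, views i = some vi → views j = some vj →
      (∃ v, (i, v) ∈ vj) → vi ⊆ vj)
    (hsize : ∀ i w, views i = some w → n - k ≤ w.card)
    (huniq : ∀ i v v', (i, v) ∈ minView → (i, v') ∈ minView → v = v')
    -- Validity of the views: a pair ⟨j, v⟩ records the value written by p_j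
    (hvalid : ∀ i w, views i = some w → ∀ p ∈ w, p.2 = input p.1) :
    (∀ w w', SelectedView1 views w → SelectedView1 views w' → w = w') ∧
    (∀ w, SelectedView1 views w → w = minView) ∧
    (∀ w, SelectedView1 views w → ∀ v ∈ w.image Prod.snd,
       ∃ j, v = input j) :=
  kIS_consensus_agreement_validity_general n k Val hk input views minView hret hmin himm hsize huniq
    hvalid
end

section
/- Size of views along the immediacy chain: for views satisfying Self-inclusion, Containment and Immediacy, if view_i ⊊ view_j then every index appearing in view_i has its view contained in view_i; consequently the number of processes whose view equals or is contained in a given view V is at least |V| restricted to indices appearing in V. In particular, the number of processes returning the minimum view is exactly its cardinality (among processes that return). -/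
/-! By Immediacy, a returned view contains the view of every process it names. Applied to the
minimum view this gives equality, so the processes returning `minView` are exactly the indices
of `minView`; these are in bijection with its pairs because a view holds one value per index. -/

namespace Views

variable {ι Val : Type*}

/-- The indices `Idx V` of a view. -/
def idx [DecidableEq ι] (V : Finset (ι × Val)) : Finset ι := V.image Prod.fst

theorem mem_idx [DecidableEq ι] {V : Finset (ι × Val)} {i : ι} :
    i ∈ idx V ↔ ∃ v, (i, v) ∈ V := by
  simp [idx]

theorem card_idx [DecidableEq ι] {V : Finset (ι × Val)}
    (huniq : ∀ i v v', (i, v) ∈ V → (i, v') ∈ V → v = v') : (idx V).card = V.card := by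
  refine Finset.card_image_of_injOn ?_
  rintro ⟨i, v⟩ hv ⟨i', v'⟩ hv' (rfl : i = i')
  rw [huniq i v v' hv hv']

variable {views : ι → Option (Finset (ι × Val))} {minView : Finset (ι × Val)}

theorem eq_min_of_mem_idx
    (himm : ∀ i j vi vj, views i = some vi → views j = some vj →
      (∃ v, (i, v) ∈ vj) → vi ⊆ vj)
    {i₀ : ι} (hi₀ : views i₀ = some minView)
    (hmin : ∀ i w, views i = some w → minView ⊆ w)
    {i : ι} (hi : ∃ v, (i, v) ∈ minView) {w : Finset (ι × Val)} (hw : views i = some w) :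
    w = minView :=
  (himm i i₀ w minView hw hi₀ hi).antisymm (hmin i w hw)

theorem filter_eq_some_min_eq_idx [Fintype ι] [DecidableEq ι] [DecidableEq Val]
    (hself : ∀ i vi, views i = some vi → ∃ v, (i, v) ∈ vi)
    (himm : ∀ i j vi vj, views i = some vi → views j = some vj →
      (∃ v, (i, v) ∈ vj) → vi ⊆ vj)
    {i₀ : ι} (hi₀ : views i₀ = some minView)
    (hmin : ∀ i w, views i = some w → minView ⊆ w)
    (hall : ∀ i, (∃ v, (i, v) ∈ minView) → (views i).isSome) :
    Finset.univ.filter (fun i => views i = some minView) = idx minView := by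
  ext i
  rw [Finset.mem_filter, mem_idx]
  refine ⟨fun h => hself i minView h.2, fun hi => ⟨Finset.mem_univ i, ?_⟩⟩
  obtain ⟨w, hw⟩ := Option.isSome_iff_exists.mp (hall i hi)
  rw [hw, eq_min_of_mem_idx himm hi₀ hmin hi hw]

end Views

open Views in
theorem min_view_returner_count_general
    (n : ℕ) (Val : Type) [DecidableEq Val]
    (views : Fin n → Option (Finset (Fin n × Val)))
    (hself : ∀ i vi, views i = some vi → ∃ v, (i, v) ∈ vi)
    (himm : ∀ i j vi vj, views i = some vi → views j = some vj →
      (∃ v, (i, v) ∈ vj) → vi ⊆ vj)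
    (minView : Finset (Fin n × Val))
    (hret : ∃ i₀, views i₀ = some minView)
    (hmin : ∀ i w, views i = some w → minView ⊆ w)
    (huniq : ∀ (w : Finset (Fin n × Val)) i v v',
      (∃ j, views j = some w) → (i, v) ∈ w → (i, v') ∈ w → v = v')
    -- every process whose index appears in min_view returns a view
    (hall : ∀ i, (∃ v, (i, v) ∈ minView) → (views i).isSome) :
    (∀ (W : Finset (Fin n × Val)), (∃ j, views j = some W) →
       ∀ i, (∃ v, (i, v) ∈ W) → ∀ w, views i = some w → w ⊆ W) ∧
    (∀ i, (∃ v, (i, v) ∈ minView) → ∀ w, views i = some w → w = minView) ∧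
    ((Finset.univ.filter fun i : Fin n => views i = some minView).card
        = minView.card) := by
  obtain ⟨i₀, hi₀⟩ := hret
  refine ⟨fun W ⟨j, hj⟩ i hi w hw => himm i j w W hw hj hi,
    fun i hi w hw => eq_min_of_mem_idx himm hi₀ hmin hi hw, ?_⟩
  rw [filter_eq_some_min_eq_idx hself himm hi₀ hmin hall]
  exact card_idx (huniq minView · · · ⟨i₀, hi₀⟩)

/-- size of views along the immediacy chain. For any returned
view W, every process whose index appears in W and which returns has its view
contained in W; for the minimum view, such views equal `min_view`, and (when
all processes of Idx(min_view) return) the number of processes returning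
`min_view` equals its cardinality. -/
theorem min_view_returner_count
    (n : ℕ) (Val : Type) [DecidableEq Val]
    (views : Fin n → Option (Finset (Fin n × Val)))
    (hself : ∀ i vi, views i = some vi → ∃ v, (i, v) ∈ vi)
    (hcont : ∀ i j vi vj, views i = some vi → views j = some vj →
      vi ⊆ vj ∨ vj ⊆ vi)
    (himm : ∀ i j vi vj, views i = some vi → views j = some vj →
      (∃ v, (i, v) ∈ vj) → vi ⊆ vj)
    (minView : Finset (Fin n × Val))
    (hret : ∃ i₀, views i₀ = some minView)
    (hmin : ∀ i w, views i = some w → minView ⊆ w)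
    (huniq : ∀ (w : Finset (Fin n × Val)) i v v',
      (∃ j, views j = some w) → (i, v) ∈ w → (i, v') ∈ w → v = v')
    -- every process whose index appears in min_view returns a view
    (hall : ∀ i, (∃ v, (i, v) ∈ minView) → (views i).isSome) :
    (∀ (W : Finset (Fin n × Val)), (∃ j, views j = some W) →
       ∀ i, (∃ v, (i, v) ∈ W) → ∀ w, views i = some w → w ⊆ W) ∧
    (∀ i, (∃ v, (i, v) ∈ minView) → ∀ w, views i = some w → w = minView) ∧
    ((Finset.univ.filter fun i : Fin n => views i = some minView).card
        = minView.card) :=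
  min_view_returner_count_general n Val views hself himm minView hret hmin huniq hall
end
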